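/- Let λ be a Young diagram and j a nonempty column of λ that contains a special box, and set h = top(j). If the box (h, j+1) belongs to λ, then column j+1 of λ also contains a special box (and top(j+1)=h). -/
import Mathlib


open scoped Classical

noncomputable section

namespace DriftKL

/-- `(i,j)` is a box of the Young diagram of `lam` (French notation, rows indexed
bottom-to-top, everything 1-indexed). -/
def InShape (lam : ℕ → ℕ) (i j : ℕ) : Prop := 1 ≤ i ∧ 1 ≤ j ∧ j ≤ lam i

/-- `lam` encodes a partition `λ₁ ≥ ⋯ ≥ λ_ℓ > 0` (1-indexed; `0` outside `[1,ℓ]`). -/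
def IsPartitionFun (ℓ : ℕ) (lam : ℕ → ℕ) : Prop :=
  (∀ i, 1 ≤ i → i ≤ ℓ → 1 ≤ lam i) ∧
  (∀ i j, 1 ≤ i → i ≤ j → j ≤ ℓ → lam j ≤ lam i) ∧
  (∀ i, i = 0 ∨ ℓ < i → lam i = 0)

/-- The Finset of boxes of the Young diagram of `lam`. -/
def shapeBoxes (ℓ : ℕ) (lam : ℕ → ℕ) : Finset (ℕ × ℕ) :=
  (Finset.Icc 1 ℓ ×ˢ Finset.Icc 1 (lam 1)).filter (fun p => p.2 ≤ lam p.1)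

/-- Semistandardness: positive entries, rows weakly increase left-to-right,
columns strictly increase bottom-to-top. -/
def IsSSYT (lam : ℕ → ℕ) (T : ℕ → ℕ → ℕ) : Prop :=
  (∀ i j, InShape lam i j → 1 ≤ T i j) ∧
  (∀ i j, InShape lam i j → InShape lam i (j+1) → T i j ≤ T i (j+1)) ∧
  (∀ i j, InShape lam i j → InShape lam (i+1) j → T i j < T (i+1) j)

/-- Flagged semistandard Young tableaux of shape `lam`, flagged by `b`,
represented as functions vanishing off the shape. -/
def SSYTset (lam b : ℕ → ℕ) : Set (ℕ → ℕ → ℕ) :=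
  {T | IsSSYT lam T ∧ (∀ i j, InShape lam i j → T i j ≤ b i) ∧
       (∀ i j, ¬ InShape lam i j → T i j = 0)}

/-- Boundary convention: `T(i,0) = 1` for `i > 0`, and `T(0,j) = 0`. -/
def TxC (T : ℕ → ℕ → ℕ) (i j : ℕ) : ℕ :=
  if i = 0 then 0 else if j = 0 then 1 else T i j

/-- The saturation `sat(T)`: `sat(T)(i,j) = [max{T(i,j-1), 1+T(i-1,j)}, T(i,j)]`. -/
def satF (lam : ℕ → ℕ) (T : ℕ → ℕ → ℕ) (i j : ℕ) : Finset ℕ :=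
  if InShape lam i j then
    Finset.Icc (max (TxC T i (j - 1)) (TxC T (i - 1) j + 1)) (T i j)
  else ∅

/-- `depth(T) = |sat(T)| - |λ|`. -/
def depthT (ℓ : ℕ) (lam : ℕ → ℕ) (T : ℕ → ℕ → ℕ) : ℕ :=
  (∑ p ∈ shapeBoxes ℓ lam, (satF lam T p.1 p.2).card) - (shapeBoxes ℓ lam).card

/-- Flagged set-valued semistandard fillings: each box carries a nonempty finite
set of positive integers bounded by the flag, such that every choice of one entry
per box is semistandard.  Off the shape the value is `∅`. -/
def SetSSYTset (lam b : ℕ → ℕ) : Set (ℕ → ℕ → Finset ℕ) :=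
  {U | (∀ i j, InShape lam i j → (U i j).Nonempty) ∧
       (∀ i j, ¬ InShape lam i j → U i j = ∅) ∧
       (∀ i j, InShape lam i j → ∀ x ∈ U i j, 1 ≤ x ∧ x ≤ b i) ∧
       (∀ T : ℕ → ℕ → ℕ, (∀ i j, InShape lam i j → T i j ∈ U i j) →
          (∀ i j, InShape lam i j → InShape lam i (j+1) → T i j ≤ T i (j+1)) ∧
          (∀ i j, InShape lam i j → InShape lam (i+1) j → T i j < T (i+1) j))}

/-- `ex(U) = |U| - |λ|`. -/
def exU (ℓ : ℕ) (lam : ℕ → ℕ) (U : ℕ → ℕ → Finset ℕ) : ℕ :=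
  (∑ p ∈ shapeBoxes ℓ lam, (U p.1 p.2).card) - (shapeBoxes ℓ lam).card

/-- The extension of a filling `T` of `λ` by `T(i,j) = ∞` if (`i > 0` and
`(i,j) ∉ λ`) or `j > λ₁`, and `T(0,j) = 0` for `1 ≤ j ≤ λ₁`. -/
def extT (lam : ℕ → ℕ) (T : ℕ → ℕ → ℕ) (i j : ℕ) : ℕ∞ :=
  if lam 1 < j then ⊤
  else if i = 0 then 0
  else if InShape lam i j then (T i j : ℕ∞) else ⊤

/-- `T` satisfies the recursion `T(i,j) = min{T(i+1,j) - 1, T(i-1,j+1) + 1}`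
at the box `(i,j)` (with the extension conventions). -/
def RecursionAt (lam : ℕ → ℕ) (T : ℕ → ℕ → ℕ) (i j : ℕ) : Prop :=
  (T i j : ℕ∞) = min (extT lam T (i + 1) j - 1) (extT lam T (i - 1) (j + 1) + 1)

/-- `(i,j)` is a northeast corner of `λ`. -/
def NECorner (lam : ℕ → ℕ) (i j : ℕ) : Prop :=
  InShape lam i j ∧ ¬ InShape lam (i + 1) j ∧ ¬ InShape lam i (j + 1)

/-- `top(j)`: the largest `i` with `(i,j) ∈ λ` (`0` if the column is empty). -/
def colTop (lam : ℕ → ℕ) (j : ℕ) : ℕ := sSup {i | InShape lam i j}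

/-- `|arm(i,j)|`. -/
def armLen (lam : ℕ → ℕ) (i j : ℕ) : ℕ := lam i - j

/-- `|leg(i,j)|`. -/
def legLen (lam : ℕ → ℕ) (i j : ℕ) : ℕ := colTop lam j - i

/-- `(p,q)` lies in `{(i,j)} ∪ arm(i,j) ∪ leg(i,j)`. -/
def InCross (lam : ℕ → ℕ) (i j p q : ℕ) : Prop :=
  (p = i ∧ j ≤ q ∧ q ≤ lam i) ∨ (q = j ∧ i ≤ p ∧ p ≤ colTop lam j)

/-- `(i,j) ∈ λ`, has equal arm and leg lengths, and no box of its cross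
satisfies `Prev` (the "already special" predicate). -/
def CandAt (lam : ℕ → ℕ) (Prev : ℕ → ℕ → Prop) (i j : ℕ) : Prop :=
  InShape lam i j ∧ armLen lam i j = legLen lam i j ∧
    ∀ p q, InCross lam i j p q → ¬ Prev p q

/-- `SpecialLevels lam z i j` holds iff `(i,j)` is `y`-special for some `y < z`:
a `z`-special box is one which is maximal (componentwise) among candidates
relative to the boxes that are `y`-special for `y < z`. -/
def SpecialLevels (lam : ℕ → ℕ) : ℕ → ℕ → ℕ → Prop
  | 0 => fun _ _ => False
  | z + 1 => fun i j =>
      SpecialLevels lam z i j ∨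
        (CandAt lam (SpecialLevels lam z) i j ∧
          ∀ p q, CandAt lam (SpecialLevels lam z) p q → i ≤ p → j ≤ q → i = p ∧ j = q)

/-- `(i,j)` is special, i.e. `z`-special for some `z`. -/
def IsSpecial (lam : ℕ → ℕ) (i j : ℕ) : Prop := ∃ z, SpecialLevels lam z i j

/-- The flag `b_i = max{m ≥ 1 : B_m ≥ λ_i + m - i}` attached to partitions `λ ⊆ B`. -/
def flagOfPart (lam B : ℕ → ℕ) (i : ℕ) : ℕ :=
  sSup {m : ℕ | 1 ≤ m ∧ (lam i : ℤ) + m - i ≤ (B m : ℤ)}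
section Aux

variable {ℓ : ℕ} {lam : ℕ → ℕ}

lemma shape_iLe (hlam : IsPartitionFun ℓ lam) {i j : ℕ} (h : InShape lam i j) : i ≤ ℓ := by
  by_contra hc
  have h0 := hlam.2.2 i (Or.inr (by omega))
  obtain ⟨h1, h2, h3⟩ := h
  omega

lemma lam_anti (hlam : IsPartitionFun ℓ lam) {i i' : ℕ} (h1 : 1 ≤ i) (h2 : i ≤ i')
    (h3 : i' ≤ ℓ) : lam i' ≤ lam i := hlam.2.1 i i' h1 h2 h3

lemma colTop_bdd (hlam : IsPartitionFun ℓ lam) (j : ℕ) : BddAbove {i | InShape lam i j} :=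
  ⟨ℓ, fun _ hx => shape_iLe hlam hx⟩

lemma le_colTop (hlam : IsPartitionFun ℓ lam) {i j : ℕ} (h : InShape lam i j) :
    i ≤ colTop lam j :=
  le_csSup (colTop_bdd hlam j) (show i ∈ {i | InShape lam i j} from h)

lemma colTop_mem (hlam : IsPartitionFun ℓ lam) {i j : ℕ} (h : InShape lam i j) :
    InShape lam (colTop lam j) j :=
  Nat.sSup_mem ⟨i, show i ∈ {i | InShape lam i j} from h⟩ (colTop_bdd hlam j)

lemma shape_of_le_top (hlam : IsPartitionFun ℓ lam) {i j k : ℕ} (h : InShape lam i j)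
    (hk1 : 1 ≤ k) (hk2 : k ≤ colTop lam j) : InShape lam k j := by
  have ht := colTop_mem hlam h
  obtain ⟨h1, h2, h3⟩ := ht
  have hle : k ≤ ℓ := le_trans hk2 (shape_iLe hlam ⟨h1, h2, h3⟩)
  exact ⟨hk1, h2, le_trans h3 (lam_anti hlam hk1 hk2 (shape_iLe hlam ⟨h1, h2, h3⟩))⟩

/-- Discrete intermediate value theorem for integer functions with up-steps ≤ 1. -/
lemma ivt (a b : ℕ) (g : ℕ → ℤ) (hab : a ≤ b)
    (step : ∀ k, a ≤ k → k < b → g (k + 1) ≤ g k + 1)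
    (ha : g a ≤ 0) (hb : 0 ≤ g b) : ∃ k, a ≤ k ∧ k ≤ b ∧ g k = 0 := by
  by_contra hcon
  push_neg at hcon
  have haF : a ∈ (Finset.Icc a b).filter (fun k => g k ≤ 0) := by
    simp only [Finset.mem_filter, Finset.mem_Icc]
    exact ⟨⟨le_refl a, hab⟩, ha⟩
  obtain ⟨k₀, hk₀mem, hk₀max⟩ :=
    Finset.exists_max_image ((Finset.Icc a b).filter (fun k => g k ≤ 0)) id ⟨a, haF⟩
  simp only [Finset.mem_filter, Finset.mem_Icc] at hk₀mem
  obtain ⟨⟨hk1, hk2⟩, hk3⟩ := hk₀mem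
  have hne : g k₀ ≠ 0 := hcon k₀ hk1 hk2
  have hklt : k₀ < b := by
    rcases lt_or_eq_of_le hk2 with h | h
    · exact h
    · exfalso; rw [h] at hk3 hne; omega
  have hnext : g (k₀ + 1) ≤ 0 := le_trans (step k₀ hk1 hklt) (by omega)
  have hmem : k₀ + 1 ∈ (Finset.Icc a b).filter (fun k => g k ≤ 0) := by
    simp only [Finset.mem_filter, Finset.mem_Icc]
    exact ⟨⟨by omega, by omega⟩, hnext⟩
  have := hk₀max (k₀ + 1) hmem
  simp only [id] at this
  omega

/-- `(i,j)` is a box of the shape with arm length equal to leg length. -/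
def Diag (lam : ℕ → ℕ) (i j : ℕ) : Prop :=
  InShape lam i j ∧ lam i + i = j + colTop lam j

lemma diag_armleg (hlam : IsPartitionFun ℓ lam) {i j : ℕ} (hd : Diag lam i j) :
    armLen lam i j = legLen lam i j := by
  have h4 : i ≤ colTop lam j := le_colTop hlam hd.1
  obtain ⟨⟨h1, h2, h3⟩, he⟩ := hd
  unfold armLen legLen
  omega

lemma armleg_diag (hlam : IsPartitionFun ℓ lam) {i j : ℕ} (hs : InShape lam i j)
    (ha : armLen lam i j = legLen lam i j) : Diag lam i j := by
  have h4 := le_colTop hlam hs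
  obtain ⟨h1, h2, h3⟩ := hs
  unfold armLen legLen at ha
  exact ⟨⟨h1, h2, h3⟩, by omega⟩

/-- `(i,j)` is the topmost arm=leg box of its column. -/
def TopZero (lam : ℕ → ℕ) (i j : ℕ) : Prop :=
  Diag lam i j ∧ ∀ k, i < k → ¬ Diag lam k j

lemma topzero_exists (hlam : IsPartitionFun ℓ lam) {a c : ℕ} (hd : Diag lam a c) :
    ∃ k, a ≤ k ∧ TopZero lam k c := by
  have haF : a ∈ (Finset.Icc a (colTop lam c)).filter (fun k => Diag lam k c) := by
    simp only [Finset.mem_filter, Finset.mem_Icc]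
    exact ⟨⟨le_refl a, le_colTop hlam hd.1⟩, hd⟩
  obtain ⟨k, hkmem, hkmax⟩ :=
    Finset.exists_max_image ((Finset.Icc a (colTop lam c)).filter (fun k => Diag lam k c))
      id ⟨a, haF⟩
  have ha' := hkmax a haF
  simp only [id] at ha'
  simp only [Finset.mem_filter, Finset.mem_Icc] at hkmem
  refine ⟨k, ha', hkmem.2, ?_⟩
  intro k' hk' hdk'
  have hmem : k' ∈ (Finset.Icc a (colTop lam c)).filter (fun k => Diag lam k c) := by
    simp only [Finset.mem_filter, Finset.mem_Icc]
    exact ⟨⟨by omega, le_colTop hlam hdk'.1⟩, hdk'⟩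
  have := hkmax k' hmem
  simp only [id] at this
  omega

/-- Two topmost arm=leg boxes cannot share a row (ordered version). -/
lemma g1_aux (hlam : IsPartitionFun ℓ lam) {t c c' : ℕ} (h1 : TopZero lam t c)
    (h2 : TopZero lam t c') (hcc : c < c') : False := by
  obtain ⟨⟨hs1, he1⟩, htop1⟩ := h1
  obtain ⟨⟨hs2, he2⟩, htop2⟩ := h2
  set H := colTop lam c with hH
  set H' := colTop lam c' with hH'
  have htH : t ≤ H := le_colTop hlam hs1
  have htH' : t ≤ H' := le_colTop hlam hs2
  have hHH' : H' + (c' - c) = H := by omega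
  have hHc : InShape lam H c := colTop_mem hlam hs1
  have hHl : H ≤ ℓ := shape_iLe hlam hHc
  -- lam (H'+1) ≥ c' leads to contradiction with colTop c' = H'
  by_cases hg : c' ≤ lam (H' + 1)
  · have : InShape lam (H' + 1) c' := ⟨by omega, hs2.2.1, hg⟩
    have := le_colTop hlam this
    omega
  · -- otherwise g(H'+1) ≤ 0 in column c; IVT gives an arm=leg box above t
    push_neg at hg
    have hstep : ∀ k, H' + 1 ≤ k → k < H →
        (lam (k + 1) : ℤ) + (k + 1) - (c + H) ≤ (lam k : ℤ) + k - (c + H) + 1 := by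
      intro k hk1 hk2
      have : lam (k + 1) ≤ lam k := lam_anti hlam (by omega) (by omega) (by omega)
      omega
    have hA : (lam (H' + 1) : ℤ) + (H' + 1) - (c + H) ≤ 0 := by omega
    have hB : (0 : ℤ) ≤ (lam H : ℤ) + H - (c + H) := by
      have := hHc.2.2; omega
    obtain ⟨k, hka, hkb, hkz⟩ := ivt (H' + 1) H (fun k => (lam k : ℤ) + k - (c + H))
      (by omega) hstep hA hB
    have hkz0 : (lam k : ℤ) + k - (c + H) = 0 := hkz
    have hkz' : lam k + k = c + H := by push_cast at hkz0; omega
    have hks : InShape lam k c := ⟨by omega, hs1.2.1, by omega⟩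
    exact htop1 k (by omega) ⟨hks, hkz'⟩

lemma g1 (hlam : IsPartitionFun ℓ lam) {t c c' : ℕ} (h1 : TopZero lam t c)
    (h2 : TopZero lam t c') : c = c' := by
  rcases lt_trichotomy c c' with h | h | h
  · exact absurd (g1_aux hlam h1 h2 h) (by simp)
  · exact h
  · exact absurd (g1_aux hlam h2 h1 h) (by simp)

/-- The cross of a topmost arm=leg box meets no other topmost arm=leg box. -/
lemma g2 (hlam : IsPartitionFun ℓ lam) {i j p q : ℕ} (hm : TopZero lam i j)
    (hw : TopZero lam p q) (hc : InCross lam i j p q) : p = i ∧ q = j := by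
  rcases hc with ⟨hp, hjq, _⟩ | ⟨hq, hip, _⟩
  · subst hp
    exact ⟨rfl, (g1 hlam hw hm).symm ▸ rfl⟩
  · subst hq
    rcases lt_or_eq_of_le hip with h | h
    · exact absurd hw.1 (hm.2 p h)
    · exact ⟨h.symm, rfl⟩

/-- Every `z`-special box is the topmost arm=leg box of its column. -/
lemma t1 (hlam : IsPartitionFun ℓ lam) :
    ∀ z i j, SpecialLevels lam z i j → TopZero lam i j := by
  intro z
  induction z with
  | zero => intro i j h; exact absurd h (by simp [SpecialLevels])
  | succ z ih =>
    intro i j h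
    rcases h with h | ⟨hcand, hmax⟩
    · exact ih i j h
    · obtain ⟨hs, ha, hcr⟩ := hcand
      have hd : Diag lam i j := armleg_diag hlam hs ha
      obtain ⟨k, hik, htz⟩ := topzero_exists hlam hd
      rcases lt_or_eq_of_le hik with hlt | heq
      · -- show (k,j) is also a candidate, contradicting maximality of (i,j)
        exfalso
        have hkcand : CandAt lam (SpecialLevels lam z) k j := by
          refine ⟨htz.1.1, diag_armleg hlam htz.1, ?_⟩
          intro p q hpq hsl
          have hwtz : TopZero lam p q := ih p q hsl
          obtain ⟨hp, hq⟩ := g2 hlam htz hwtz hpq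
          refine hcr p q (Or.inr ⟨hq, by omega, ?_⟩) hsl
          rw [hp]
          exact le_colTop hlam htz.1.1
        have := hmax k j hkcand hik (le_refl j)
        omega
      · subst heq; exact htz
    
lemma sl_shape (hlam : IsPartitionFun ℓ lam) {z i j : ℕ} (h : SpecialLevels lam z i j) :
    InShape lam i j := (t1 hlam z i j h).1.1

lemma cand_mem_shapeBoxes (hlam : IsPartitionFun ℓ lam) {i j : ℕ}
    (hs : InShape lam i j) : (i, j) ∈ shapeBoxes ℓ lam := by
  obtain ⟨h1, h2, h3⟩ := hs
  have hiℓ : i ≤ ℓ := shape_iLe hlam ⟨h1, h2, h3⟩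
  have : lam i ≤ lam 1 := lam_anti hlam (le_refl 1) h1 hiℓ
  simp only [shapeBoxes, Finset.mem_filter, Finset.mem_product, Finset.mem_Icc]
  exact ⟨⟨⟨h1, hiℓ⟩, h2, by omega⟩, h3⟩

/-- At a stable level there are no candidates at all. -/
lemma stable_no_cand (hlam : IsPartitionFun ℓ lam) {Z : ℕ}
    (hst : ∀ i j, SpecialLevels lam (Z + 1) i j → SpecialLevels lam Z i j) :
    ∀ i j, ¬ CandAt lam (SpecialLevels lam Z) i j := by
  intro i j hc
  set F := (shapeBoxes ℓ lam).filter
    (fun p => CandAt lam (SpecialLevels lam Z) p.1 p.2 ∧ i ≤ p.1 ∧ j ≤ p.2) with hF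
  have hijF : (i, j) ∈ F := by
    simp only [hF, Finset.mem_filter]
    exact ⟨cand_mem_shapeBoxes hlam hc.1, hc, le_refl i, le_refl j⟩
  obtain ⟨s, hsF, hsmax⟩ := F.exists_max_image (fun p => p.1 + p.2) ⟨(i, j), hijF⟩
  simp only [hF, Finset.mem_filter] at hsF
  obtain ⟨hsShape, hsCand, hsi, hsj⟩ := hsF
  have hnew : SpecialLevels lam (Z + 1) s.1 s.2 := by
    refine Or.inr ⟨hsCand, ?_⟩
    intro p q hpq h1 h2
    have hpqF : (p, q) ∈ F := by
      simp only [hF, Finset.mem_filter]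
      exact ⟨cand_mem_shapeBoxes hlam hpq.1, hpq, by omega, by omega⟩
    have := hsmax (p, q) hpqF
    simp only at this
    omega
  have hZ : SpecialLevels lam Z s.1 s.2 := hst s.1 s.2 hnew
  exact hsCand.2.2 s.1 s.2 (Or.inl ⟨rfl, le_refl s.2, hsCand.1.2.2⟩) hZ

/-- A stable level exists. -/
lemma exists_stable (hlam : IsPartitionFun ℓ lam) :
    ∃ Z, ∀ i j, SpecialLevels lam (Z + 1) i j → SpecialLevels lam Z i j := by
  by_contra hcon
  push_neg at hcon
  set S : ℕ → Finset (ℕ × ℕ) :=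
    fun z => (shapeBoxes ℓ lam).filter (fun p => SpecialLevels lam z p.1 p.2) with hS
  have hcard : ∀ z, z ≤ (S z).card := by
    intro z
    induction z with
    | zero => omega
    | succ z ih =>
      obtain ⟨a, b, hab1, hab2⟩ := hcon z
      have hsub : S z ⊂ S (z + 1) := by
        constructor
        · intro x hx
          simp only [hS, Finset.mem_filter] at *
          exact ⟨hx.1, Or.inl hx.2⟩
        · intro hsub'
          have : (a, b) ∈ S (z + 1) := by
            simp only [hS, Finset.mem_filter]
            exact ⟨cand_mem_shapeBoxes hlam (sl_shape hlam hab1), hab1⟩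
          have := hsub' this
          simp only [hS, Finset.mem_filter] at this
          exact hab2 this.2
      have := Finset.card_lt_card hsub
      omega
  have hbound : (S ((shapeBoxes ℓ lam).card + 1)).card ≤ (shapeBoxes ℓ lam).card :=
    Finset.card_le_card (Finset.filter_subset _ _)
  have := hcard ((shapeBoxes ℓ lam).card + 1)
  omega

/-- Every topmost arm=leg box is special. -/
lemma topzero_special (hlam : IsPartitionFun ℓ lam) {i j : ℕ} (hm : TopZero lam i j) :
    IsSpecial lam i j := by
  obtain ⟨Z, hst⟩ := exists_stable hlam
  by_cases hZ : SpecialLevels lam Z i j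
  · exact ⟨Z, hZ⟩
  · exfalso
    apply stable_no_cand hlam hst i j
    refine ⟨hm.1.1, diag_armleg hlam hm.1, ?_⟩
    intro p q hpq hsl
    have hwtz : TopZero lam p q := t1 hlam Z p q hsl
    obtain ⟨hp, hq⟩ := g2 hlam hm hwtz hpq
    subst hp; subst hq
    exact hZ hsl

end Aux
/-- If column `j` of `λ` contains a special box and, with
`h = top(j)`, the box `(h, j+1)` belongs to `λ`, then column `j+1` also contains
a special box and `top(j+1) = h`. -/
theorem statement16 (ℓ : ℕ) (lam : ℕ → ℕ)
    (hlam : IsPartitionFun ℓ lam)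
    (j : ℕ) (hj : InShape lam 1 j)
    (hsp : ∃ i, IsSpecial lam i j)
    (hnext : InShape lam (colTop lam j) (j + 1)) :
    (∃ i', IsSpecial lam i' (j + 1)) ∧ colTop lam (j + 1) = colTop lam j := by
  obtain ⟨i, z, hsl⟩ := hsp
  have htz : TopZero lam i j := t1 hlam z i j hsl
  obtain ⟨⟨hs, he⟩, -⟩ := htz
  set h := colTop lam j with hh
  have hj1 : 1 ≤ j := hj.2.1
  have htop : colTop lam (j + 1) = h := by
    apply le_antisymm
    · refine csSup_le ⟨h, hnext⟩ ?_
      intro x hx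
      have hxj : InShape lam x j := ⟨hx.1, hj1, by have := hx.2.2; omega⟩
      exact le_colTop hlam hxj
    · exact le_colTop hlam hnext
  have hiH : i ≤ h := le_colTop hlam hs
  have hih : i < h := by
    rcases lt_or_eq_of_le hiH with h' | h'
    · exact h'
    · exfalso
      have h2 := hnext.2.2
      rw [← h'] at h2
      omega
  have hHl : h ≤ ℓ := shape_iLe hlam hnext
  have hi1 : 1 ≤ i := hs.1
  have hstep : ∀ k, i ≤ k → k < h →
      (lam (k + 1) : ℤ) + (k + 1) - ((j + 1) + h) ≤ (lam k : ℤ) + k - ((j + 1) + h) + 1 := by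
    intro k hk1 hk2
    have : lam (k + 1) ≤ lam k := lam_anti hlam (by omega) (by omega) (by omega)
    omega
  have hA : (lam i : ℤ) + i - ((j + 1) + h) ≤ 0 := by omega
  have hB : (0 : ℤ) ≤ (lam h : ℤ) + h - ((j + 1) + h) := by
    have := hnext.2.2; omega
  obtain ⟨k, hka, hkb, hkz⟩ := ivt i h (fun k => (lam k : ℤ) + k - ((j + 1) + h))
    (le_of_lt hih) hstep hA hB
  have hkz0 : (lam k : ℤ) + k - ((j + 1) + h) = 0 := hkz
  have hkz' : lam k + k = (j + 1) + h := by push_cast at hkz0; omega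
  have hks : InShape lam k (j + 1) := ⟨by omega, by omega, by omega⟩
  have hdk : Diag lam k (j + 1) := ⟨hks, by rw [htop]; omega⟩
  obtain ⟨k', -, htz'⟩ := topzero_exists hlam hdk
  exact ⟨⟨k', topzero_special hlam htz'⟩, htop⟩

end DriftKL
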